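/- Let f satisfy f(n) = ∑_{j=1}^k β_j f(n-j) for n ≥ k with f(0)=...=f(k-2)=0, f(k-1)=1. Then for all n ≥ 0, f(n+k-1) = ∑_{i₁ + 2i₂ + ... + k·i_k = n} multinomial(i₁+...+i_k; i₁,…,i_k) · β₁^{i₁}···β_k^{i_k}. -/

import Mathlib

/-!
With `P = ∑ⱼ βⱼ X^{j+1}`, the sequence `u n = f (n + k - 1)` satisfies `u 0 = 1` and
`u n = ∑ⱼ βⱼ u (n - j - 1)` (terms with `j ≥ n` vanish by the initial zeros of `f`), which is
the recurrence of the coefficients of `1 / (1 - P) = ∑ₘ Pᵐ`. Only `m ≤ n` contributes to the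
`n`-th coefficient, and the multinomial theorem expands the coefficient of `Xⁿ` in `Pᵐ` as the
sum over `i` with `∑ iⱼ = m` and `∑ (j + 1) iⱼ = n`.
-/

open Finset Polynomial

section WeightedPoly

variable {ι R : Type*} [Fintype ι] [CommSemiring R]

noncomputable def weightedPoly (b : ι → R) (w : ι → ℕ) : R[X] :=
  ∑ j, C (b j) * X ^ w j

variable {b : ι → R} {w : ι → ℕ}

lemma coeff_weightedPoly_mul (Q : R[X]) (n : ℕ) :
    (weightedPoly b w * Q).coeff n = ∑ j, b j * if w j ≤ n then Q.coeff (n - w j) else 0 := by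
  simp only [weightedPoly, sum_mul, finsetSum_coeff, mul_assoc, coeff_C_mul, coeff_X_pow_mul']

lemma eq_coeff_geom_sum_of_recurrence (hw : ∀ j, 0 < w j) {u : ℕ → R} (hu₀ : u 0 = 1)
    (hu : ∀ n, 0 < n → u n = ∑ j, b j * if w j ≤ n then u (n - w j) else 0) {n N : ℕ}
    (hn : n ≤ N) : u n = (∑ m ∈ range (N + 1), weightedPoly b w ^ m).coeff n := by
  induction N generalizing n with
  | zero => simp [Nat.le_zero.mp hn, hu₀]
  | succ N ih =>
    rw [geom_sum_succ, coeff_add, coeff_weightedPoly_mul, coeff_one]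
    rcases Nat.eq_zero_or_pos n with rfl | hpos
    · simp [hu₀, fun j => Nat.not_le_of_lt (hw j)]
    · rw [if_neg hpos.ne', add_zero, hu n hpos]
      refine sum_congr rfl fun j _ => ?_
      split_ifs
      · rw [ih (by have := hw j; omega)]
      · rfl

lemma sum_le_weighted_sum (hw : ∀ j, 0 < w j) (i : ι → ℕ) : ∑ j, i j ≤ ∑ j, w j * i j :=
  sum_le_sum fun j _ => Nat.le_mul_of_pos_left _ (hw j)

variable [DecidableEq ι]

lemma coeff_weightedPoly_pow (m n : ℕ) :
    (weightedPoly b w ^ m).coeff n =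
      ∑ i ∈ (piAntidiag univ m).filter (fun i => ∑ j, w j * i j = n),
        (Nat.multinomial univ i : R) * ∏ j, b j ^ i j := by
  have hterm : ∀ i : ι → ℕ, ∏ j, (C (b j) * X ^ w j) ^ i j
      = C (∏ j, b j ^ i j) * X ^ ∑ j, w j * i j := by
    intro i
    simp only [mul_pow, ← C_pow, ← pow_mul, prod_mul_distrib, ← map_prod, prod_pow_eq_pow_sum]
  rw [weightedPoly, sum_pow_eq_sum_piAntidiag, finsetSum_coeff, sum_filter]
  refine sum_congr rfl fun i _ => ?_
  rw [hterm, ← mul_assoc, ← C_eq_natCast, ← C_mul, coeff_C_mul_X_pow]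
  exact ite_congr (propext eq_comm) (fun _ => rfl) fun _ => rfl

lemma coeff_geom_sum_weightedPoly (hw : ∀ j, 0 < w j) (n : ℕ) :
    (∑ m ∈ range (n + 1), weightedPoly b w ^ m).coeff n =
      ∑ i ∈ (Fintype.piFinset fun _ : ι => range (n + 1)).filter
          (fun i => ∑ j, w j * i j = n),
        (Nat.multinomial univ i : R) * ∏ j, b j ^ i j := by
  have hfiber : ∀ m, (piAntidiag univ m).filter (fun i => ∑ j, w j * i j = n) =
      ((Fintype.piFinset fun _ : ι => range (n + 1)).filter
        (fun i => ∑ j, w j * i j = n)).filter (fun i => ∑ j, i j = m) := by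
    intro m
    ext i
    simp only [mem_filter, mem_piAntidiag, Fintype.mem_piFinset, mem_range, mem_univ,
      implies_true, and_true]
    constructor
    · rintro ⟨rfl, hn⟩
      refine ⟨⟨fun j => ?_, hn⟩, rfl⟩
      have := (single_le_sum (fun j _ => Nat.zero_le (i j)) (mem_univ j)).trans
        (sum_le_weighted_sum hw i)
      omega
    · rintro ⟨⟨-, hn⟩, hm⟩
      exact ⟨hm, hn⟩
  simp only [finsetSum_coeff, coeff_weightedPoly_pow, hfiber]
  refine sum_fiberwise_of_maps_to (fun i hi => ?_) _
  rw [mem_filter] at hi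
  rw [mem_range]
  have := sum_le_weighted_sum hw i
  omega

end WeightedPoly

theorem stmt_18 (k : ℕ) (R : Type*) [CommRing R] (β : Fin k → R)
    (f : ℕ → R)
    (h0 : ∀ n < k - 1, f n = 0) (h1 : f (k - 1) = 1)
    (hrec : ∀ n, k ≤ n → f n = ∑ j : Fin k, β j * f (n - ((j : ℕ) + 1)))
    (n : ℕ) :
    f (n + k - 1) = ∑ i ∈ (Fintype.piFinset fun _ : Fin k => range (n + 1)).filter
        (fun i => ∑ j : Fin k, ((j : ℕ) + 1) * i j = n),
      (Nat.multinomial Finset.univ i : R) * ∏ j : Fin k, β j ^ i j := by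
  have hw : ∀ j : Fin k, 0 < (j : ℕ) + 1 := fun j => Nat.succ_pos j
  have hu₀ : f (0 + k - 1) = 1 := by rwa [zero_add]
  have hu : ∀ n, 0 < n → f (n + k - 1) =
      ∑ j : Fin k, β j * if (j : ℕ) + 1 ≤ n then f (n - ((j : ℕ) + 1) + k - 1) else 0 := by
    intro n hn
    rw [hrec _ (by omega)]
    refine sum_congr rfl fun j _ => ?_
    have hj := j.isLt
    split_ifs with hjn
    · congr 2
      omega
    · rw [h0 _ (by omega)]
  rw [eq_coeff_geom_sum_of_recurrence hw (u := fun n => f (n + k - 1)) hu₀ hu le_rfl,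
    coeff_geom_sum_weightedPoly hw]
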